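/- Let n ≥ 4 be an even integer. Then the DCT-IV matrix satisfies the factorization C^IV_n = P_n^T · U_n · blkdiag(C^II_{n/2}, C^II_{n/2}) · R_n, where blkdiag(A,B) denotes the block-diagonal matrix with diagonal blocks A and B. -/

import Mathlib

open Matrix Real

/-- `ε_n(j)`: `1/√2` if `j = 0` or `j = n`, else `1`. -/
noncomputable def eps (n j : ℕ) : ℝ := if j = 0 ∨ j = n then 1 / Real.sqrt 2 else 1

/-- DCT-I matrix of size `(n+1) × (n+1)`. -/
noncomputable def C1 (n : ℕ) : Matrix (Fin (n + 1)) (Fin (n + 1)) ℝ := fun j k =>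
  Real.sqrt (2 / n) * eps n j.val * eps n k.val *
    Real.cos (((j.val * k.val : ℕ) : ℝ) * Real.pi / n)

/-- DCT-II matrix of size `n × n`. -/
noncomputable def C2 (n : ℕ) : Matrix (Fin n) (Fin n) ℝ := fun j k =>
  Real.sqrt (2 / n) * eps n j.val *
    Real.cos (((j.val * (2 * k.val + 1) : ℕ) : ℝ) * Real.pi / (2 * n))

/-- DCT-III matrix: transpose of DCT-II. -/
noncomputable def C3 (n : ℕ) : Matrix (Fin n) (Fin n) ℝ := (C2 n)ᵀ

/-- DCT-IV matrix of size `n × n`. -/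
noncomputable def C4 (n : ℕ) : Matrix (Fin n) (Fin n) ℝ := fun j k =>
  Real.sqrt (2 / n) *
    Real.cos ((((2 * j.val + 1) * (2 * k.val + 1) : ℕ) : ℝ) * Real.pi / (4 * n))

/-- Block-diagonal matrix with diagonal blocks `A` (size `p`) and `B` (size `q`),
viewed as a matrix of size `n` (intended for `n = p + q`). -/
noncomputable def blkdiag {n p q : ℕ} (A : Matrix (Fin p) (Fin p) ℝ)
    (B : Matrix (Fin q) (Fin q) ℝ) : Matrix (Fin n) (Fin n) ℝ := fun i j =>
  if hi : i.val < p then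
    if hj : j.val < p then A ⟨i.val, hi⟩ ⟨j.val, hj⟩ else 0
  else
    if j.val < p then 0
    else
      if hi' : i.val - p < q then
        if hj' : j.val - p < q then B ⟨i.val - p, hi'⟩ ⟨j.val - p, hj'⟩ else 0
      else 0

/-- `2×2` block matrix `[[A, B], [C, D]]` with square blocks of size `p`,
viewed as a matrix of size `n` (intended for `n = p + p`). -/
noncomputable def blk4 {n p : ℕ} (A B C D : Matrix (Fin p) (Fin p) ℝ) :
    Matrix (Fin n) (Fin n) ℝ := fun i j =>
  if hi : i.val < p then
    if hj : j.val < p then A ⟨i.val, hi⟩ ⟨j.val, hj⟩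
    else if hj' : j.val - p < p then B ⟨i.val, hi⟩ ⟨j.val - p, hj'⟩ else 0
  else if hi' : i.val - p < p then
    if hj : j.val < p then C ⟨i.val - p, hi'⟩ ⟨j.val, hj⟩
    else if hj' : j.val - p < p then D ⟨i.val - p, hi'⟩ ⟨j.val - p, hj'⟩ else 0
  else 0

/-- Flip (anti-diagonal) matrix `Ĩ_m`. -/
noncomputable def flipMat (m : ℕ) : Matrix (Fin m) (Fin m) ℝ := fun i j =>
  if i.val + j.val + 1 = m then 1 else 0

/-- Diagonal sign matrix `D_m = diag((-1)^k)`. -/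
noncomputable def Dmat (m : ℕ) : Matrix (Fin m) (Fin m) ℝ :=
  Matrix.diagonal fun k => (-1 : ℝ) ^ (k.val)

/-- Even-odd permutation matrix `P_n` for even `n`:
`P_n x = (x_0, x_2, …, x_{n-2}, x_1, x_3, …, x_{n-1})`. -/
noncomputable def Pev (n : ℕ) : Matrix (Fin n) (Fin n) ℝ := fun i j =>
  if j.val = (if i.val < n / 2 then 2 * i.val else 2 * (i.val - n / 2) + 1) then 1 else 0

/-- Even-odd permutation matrix `P_{n+1}` of odd size `n+1` (for even `n`):
`P_{n+1} x = (x_0, x_2, …, x_n, x_1, x_3, …, x_{n-1})`. -/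
noncomputable def Podd (n : ℕ) : Matrix (Fin (n + 1)) (Fin (n + 1)) ℝ := fun i j =>
  if j.val = (if i.val ≤ n / 2 then 2 * i.val else 2 * (i.val - n / 2) - 1) then 1 else 0

/-- Butterfly matrix `H_n = (1/√2)[[I, Ĩ], [I, -Ĩ]]` with blocks of size `n/2`. -/
noncomputable def Hmat (n : ℕ) : Matrix (Fin n) (Fin n) ℝ :=
  (1 / Real.sqrt 2) •
    blk4 (1 : Matrix (Fin (n / 2)) (Fin (n / 2)) ℝ) (flipMat (n / 2)) 1 (-(flipMat (n / 2)))

/-- Butterfly matrix `Ĥ_{n+1} = (1/√2)[[I, 0, Ĩ], [0, √2, 0], [I, 0, -Ĩ]]`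
with corner blocks of size `n/2` and middle row/column indexed by `n/2`. -/
noncomputable def Hbrev (n : ℕ) : Matrix (Fin (n + 1)) (Fin (n + 1)) ℝ := fun i j =>
  (1 / Real.sqrt 2) *
    (if i.val < n / 2 then
      (if j.val < n / 2 then (if i.val = j.val then 1 else 0)
       else if j.val = n / 2 then 0
       else if i.val + (j.val - (n / 2 + 1)) + 1 = n / 2 then 1 else 0)
     else if i.val = n / 2 then (if j.val = n / 2 then Real.sqrt 2 else 0)
     else
      (if j.val < n / 2 then (if i.val - (n / 2 + 1) = j.val then 1 else 0)
       else if j.val = n / 2 then 0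
       else -(if (i.val - (n / 2 + 1)) + (j.val - (n / 2 + 1)) + 1 = n / 2 then 1 else 0)))

/-- The matrix `U_n`. -/
noncomputable def Umat (n : ℕ) : Matrix (Fin n) (Fin n) ℝ :=
  (blkdiag (n := n) (1 : Matrix (Fin 1) (Fin 1) ℝ)
    (blkdiag (n := n - 1)
      ((1 / Real.sqrt 2) • blk4 (n := n - 2)
        (1 : Matrix (Fin (n / 2 - 1)) (Fin (n / 2 - 1)) ℝ) 1 1 (-1))
      (-1 : Matrix (Fin 1) (Fin 1) ℝ))) *
  blkdiag (n := n) (1 : Matrix (Fin (n / 2)) (Fin (n / 2)) ℝ) (Dmat (n / 2) * flipMat (n / 2))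

/-- The rotation/rotation-reflection matrix `R_n`. -/
noncomputable def Rmat (n : ℕ) : Matrix (Fin n) (Fin n) ℝ :=
  blkdiag (n := n) (1 : Matrix (Fin (n / 2)) (Fin (n / 2)) ℝ) (Dmat (n / 2)) *
  blk4 (n := n)
    (Matrix.diagonal fun k : Fin (n / 2) =>
      Real.cos (((2 * k.val + 1 : ℕ) : ℝ) * Real.pi / (4 * n)))
    ((Matrix.diagonal fun k : Fin (n / 2) =>
      Real.sin (((2 * k.val + 1 : ℕ) : ℝ) * Real.pi / (4 * n))) * flipMat (n / 2))
    (-(flipMat (n / 2) * Matrix.diagonal fun k : Fin (n / 2) =>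
      Real.sin (((2 * k.val + 1 : ℕ) : ℝ) * Real.pi / (4 * n))))
    (Matrix.diagonal fun k : Fin (n / 2) =>
      Real.cos (((2 * (n / 2 - 1 - k.val) + 1 : ℕ) : ℝ) * Real.pi / (4 * n)))


/-! Write `n = 2m`, `θ_k = (2k+1)π/(4n)` and `α_{a,k} = a(2k+1)π/(2m)`, so that the DCT-II
entries are `cos α_{a,k}` up to normalisation. Row `2r` of `C^IV_n` is `cos (α_{r,k} + θ_k)` and
row `2r+1` is `cos (α_{r+1,k} - θ_k)`. Extending the DCT-II formula to all columns `k < 2m`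
through its symmetries under `k ↦ 2m-1-k`, `k ↦ m-1-k` and `k ↦ k-m`, the product
`blkdiag(C^II_m, C^II_m) R_n` has entries `cos α_{a,k} cos θ_k` in its top half and
`± cos α_{a,k} sin θ_k` in its bottom half. The butterfly `U_n` adds row `r` of the top half to
row `m-r` of the bottom half; as `cos α_{m-r,k} = (-1)^k sin α_{r,k}`, this is the addition
formula for the cosine, and `P_nᵀ` interleaves the resulting rows. -/

section BlockEntries

variable {n p q : ℕ}

lemma blkdiag_apply₁₁ (A : Matrix (Fin p) (Fin p) ℝ) (B : Matrix (Fin q) (Fin q) ℝ)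
    (i j : Fin n) (hi : i.val < p) (hj : j.val < p) :
    blkdiag A B i j = A ⟨i, hi⟩ ⟨j, hj⟩ := by
  simp [blkdiag, hi, hj]

lemma blkdiag_apply₁₂ (A : Matrix (Fin p) (Fin p) ℝ) (B : Matrix (Fin q) (Fin q) ℝ)
    (i j : Fin n) (hi : i.val < p) (hj : ¬ j.val < p) :
    blkdiag A B i j = 0 := by
  simp [blkdiag, hi, hj]

lemma blkdiag_apply₂₁ (A : Matrix (Fin p) (Fin p) ℝ) (B : Matrix (Fin q) (Fin q) ℝ)
    (i j : Fin n) (hi : ¬ i.val < p) (hj : j.val < p) :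
    blkdiag A B i j = 0 := by
  simp [blkdiag, hi, hj]

lemma blkdiag_apply₂₂ (A : Matrix (Fin p) (Fin p) ℝ) (B : Matrix (Fin q) (Fin q) ℝ)
    (i j : Fin n) (hi : ¬ i.val < p) (hj : ¬ j.val < p) (hi' : i.val - p < q)
    (hj' : j.val - p < q) :
    blkdiag A B i j = B ⟨i - p, hi'⟩ ⟨j - p, hj'⟩ := by
  simp [blkdiag, hi, hj, hi', hj']

lemma blk4_apply₁₁ (A B C D : Matrix (Fin p) (Fin p) ℝ) (i j : Fin n)
    (hi : i.val < p) (hj : j.val < p) :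
    blk4 A B C D i j = A ⟨i, hi⟩ ⟨j, hj⟩ := by
  simp [blk4, hi, hj]

lemma blk4_apply₁₂ (A B C D : Matrix (Fin p) (Fin p) ℝ) (i j : Fin n)
    (hi : i.val < p) (hj : ¬ j.val < p) (hj' : j.val - p < p) :
    blk4 A B C D i j = B ⟨i, hi⟩ ⟨j - p, hj'⟩ := by
  simp [blk4, hi, hj, hj']

lemma blk4_apply₂₁ (A B C D : Matrix (Fin p) (Fin p) ℝ) (i j : Fin n)
    (hi : ¬ i.val < p) (hi' : i.val - p < p) (hj : j.val < p) :
    blk4 A B C D i j = C ⟨i - p, hi'⟩ ⟨j, hj⟩ := by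
  simp [blk4, hi, hi', hj]

lemma blk4_apply₂₂ (A B C D : Matrix (Fin p) (Fin p) ℝ) (i j : Fin n)
    (hi : ¬ i.val < p) (hi' : i.val - p < p) (hj : ¬ j.val < p) (hj' : j.val - p < p) :
    blk4 A B C D i j = D ⟨i - p, hi'⟩ ⟨j - p, hj'⟩ := by
  simp [blk4, hi, hi', hj, hj']

end BlockEntries

lemma sum_ite_val_eq {N : ℕ} {x : ℕ} (hx : x < N) (g : Fin N → ℝ) :
    ∑ b : Fin N, (if b.val = x then g b else 0) = g ⟨x, hx⟩ := by
  rw [Fintype.sum_eq_single ⟨x, hx⟩ fun b hb => if_neg fun h => hb (Fin.ext h)]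
  simp

lemma sum_ite_val_eq_add {N : ℕ} {x y : ℕ} (hx : x < N) (hy : y < N) (hxy : x ≠ y)
    (g h : Fin N → ℝ) :
    ∑ b : Fin N, (if b.val = x then g b else if b.val = y then h b else 0)
      = g ⟨x, hx⟩ + h ⟨y, hy⟩ := by
  rw [Fintype.sum_eq_add ⟨x, hx⟩ ⟨y, hy⟩ (by simpa [Fin.ext_iff] using hxy)]
  · simp [hxy.symm]
  · rintro b ⟨hbx, hby⟩
    rw [if_neg fun h => hbx (Fin.ext h), if_neg fun h => hby (Fin.ext h)]

lemma neg_one_pow_eq_of_mod_two_eq {x y : ℕ} (h : x % 2 = y % 2) :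
    (-1 : ℝ) ^ x = (-1) ^ y :=
  neg_one_pow_congr (by simp only [Nat.even_iff]; omega)

lemma cos_odd_mul_pi_div_two_sub (k : ℕ) (x : ℝ) :
    cos ((2 * k + 1) * π / 2 - x) = (-1) ^ k * sin x := by
  rw [show (2 * k + 1) * π / 2 - x = π / 2 - x + k * π by ring, cos_add_nat_mul_pi,
    cos_pi_div_two_sub]

lemma eps_zero (m : ℕ) : eps m 0 = 1 / √2 := if_pos (Or.inl rfl)

lemma eps_of_pos_of_lt {m a : ℕ} (h0 : 0 < a) (hm : a < m) : eps m a = 1 :=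
  if_neg (by omega)

noncomputable def dctAngle (m a k : ℕ) : ℝ := a * (2 * k + 1) * π / (2 * m)

lemma dctAngle_zero (m k : ℕ) : dctAngle m 0 k = 0 := by
  simp [dctAngle]

lemma dctAngle_of_add_eq {m r s : ℕ} (hm : 0 < m) (h : r + s = m) (k : ℕ) :
    dctAngle m s k = (2 * k + 1) * π / 2 - dctAngle m r k := by
  have hm' : (m : ℝ) ≠ 0 := by positivity
  rw [← h] at hm' ⊢
  simp only [dctAngle]
  push_cast at hm' ⊢
  field_simp
  ring

noncomputable def dct2 (m a k : ℕ) : ℝ := √(2 / m) * eps m a * cos (dctAngle m a k)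

lemma C2_apply (m : ℕ) (a k : Fin m) : C2 m a k = dct2 m a k := by
  simp only [C2, dct2, dctAngle]
  push_cast
  ring_nf

lemma dct2_zero (m k : ℕ) : dct2 m 0 k = √(2 / m) / √2 := by
  rw [dct2, dctAngle_zero, eps_zero, cos_zero]
  ring

lemma dct2_of_pos_of_lt {m a : ℕ} (h0 : 0 < a) (h : a < m) (k : ℕ) :
    dct2 m a k = √(2 / m) * cos (dctAngle m a k) := by
  rw [dct2, eps_of_pos_of_lt h0 h, mul_one]

lemma dct2_of_add_eq {m r s : ℕ} (hr : 0 < r) (hs : 0 < s) (h : r + s = m) (k : ℕ) :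
    dct2 m s k = (-1) ^ k * (√(2 / m) * sin (dctAngle m r k)) := by
  rw [dct2, eps_of_pos_of_lt hs (by omega), dctAngle_of_add_eq (by omega) h,
    cos_odd_mul_pi_div_two_sub]
  ring

lemma dct2_reflect {m k l : ℕ} (a : ℕ) (h : k + l + 1 = m + m) :
    dct2 m a l = dct2 m a k := by
  have hl : (l : ℝ) = 2 * m - 1 - k := by
    rw [eq_sub_iff_add_eq, eq_sub_iff_add_eq]; exact_mod_cast (by omega : l + k + 1 = 2 * m)
  have hm : (m : ℝ) ≠ 0 := Nat.cast_ne_zero.mpr (by omega)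
  rw [dct2, dct2, dctAngle, dctAngle, hl, show (a : ℝ) * (2 * (2 * m - 1 - k) + 1) * π / (2 * m)
    = a * (2 * π) - a * (2 * k + 1) * π / (2 * m) by field_simp; ring, cos_nat_mul_two_pi_sub]

lemma dct2_reflect_half {m k l : ℕ} (a : ℕ) (h : k + l + 1 = m) :
    dct2 m a l = (-1) ^ a * dct2 m a k := by
  have hl : (l : ℝ) = m - 1 - k := by
    rw [eq_sub_iff_add_eq, eq_sub_iff_add_eq]; exact_mod_cast (by omega : l + k + 1 = m)
  have hm : (m : ℝ) ≠ 0 := Nat.cast_ne_zero.mpr (by omega)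
  rw [dct2, dct2, dctAngle, dctAngle, hl, show (a : ℝ) * (2 * (m - 1 - k) + 1) * π / (2 * m)
    = a * π - a * (2 * k + 1) * π / (2 * m) by field_simp; ring, cos_nat_mul_pi_sub]
  ring

lemma dct2_shift {m k l : ℕ} (a : ℕ) (hm : 0 < m) (h : m + l = k) :
    dct2 m a l = (-1) ^ a * dct2 m a k := by
  have hm' : (m : ℝ) ≠ 0 := by positivity
  rw [dct2, dct2, dctAngle, dctAngle, ← h, show (a : ℝ) * (2 * l + 1) * π / (2 * m)
    = a * (2 * ↑(m + l) + 1) * π / (2 * m) - a * π by push_cast; field_simp; ring,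
    cos_sub_nat_mul_pi]
  ring

noncomputable def twiddle (n k : ℕ) : ℝ := ((2 * k + 1 : ℕ) : ℝ) * π / (4 * n)

lemma twiddle_of_add_eq {n k l : ℕ} (h : k + l + 1 = n) :
    twiddle n l = π / 2 - twiddle n k := by
  have hn : (n : ℝ) ≠ 0 := Nat.cast_ne_zero.mpr (by omega)
  rw [twiddle, twiddle, ← h]
  rw [← h] at hn
  push_cast at hn ⊢
  field_simp
  ring

lemma sin_twiddle_of_add_eq {n k l : ℕ} (h : k + l + 1 = n) :
    sin (twiddle n l) = cos (twiddle n k) := by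
  rw [twiddle_of_add_eq h, sin_pi_div_two_sub]

lemma cos_twiddle_of_add_eq {n k l : ℕ} (h : k + l + 1 = n) :
    cos (twiddle n l) = sin (twiddle n k) := by
  rw [twiddle_of_add_eq h, cos_pi_div_two_sub]

lemma sqrt_two_div_add_self (m : ℕ) : √(2 / (m + m)) = √(2 / m) / √2 := by
  rw [show (2 : ℝ) / (m + m) = 2 / m / 2 by ring, Real.sqrt_div' _ zero_le_two]

lemma C4_apply_of_eq_two_mul {m r : ℕ} {j : Fin (m + m)} (hj : j.val = 2 * r)
    (k : Fin (m + m)) :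
    C4 (m + m) j k = √(2 / m) / √2 * cos (dctAngle m r k + twiddle (m + m) k) := by
  have hm : (m : ℝ) ≠ 0 := Nat.cast_ne_zero.mpr (by have := k.pos; omega)
  simp only [C4, dctAngle, twiddle, hj]
  push_cast
  rw [sqrt_two_div_add_self]
  congr 2
  field_simp
  ring

lemma C4_apply_of_eq_two_mul_add_one {m r : ℕ} {j : Fin (m + m)} (hj : j.val = 2 * r + 1)
    (k : Fin (m + m)) :
    C4 (m + m) j k = √(2 / m) / √2 * cos (dctAngle m (r + 1) k - twiddle (m + m) k) := by
  have hm : (m : ℝ) ≠ 0 := Nat.cast_ne_zero.mpr (by have := k.pos; omega)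
  simp only [C4, dctAngle, twiddle, hj]
  push_cast
  rw [sqrt_two_div_add_self]
  congr 2
  field_simp
  ring

section Permutation

variable {n : ℕ} {α : Type*}

lemma Pev_transpose_mul_apply_of_eq_two_mul (hn : Even n) (Y : Matrix (Fin n) α ℝ)
    {j i : Fin n} {r : ℕ} (hj : j.val = 2 * r) (hi : i.val = r) (k : α) :
    ((Pev n)ᵀ * Y) j k = Y i k := by
  obtain ⟨m, rfl⟩ := hn
  have := j.isLt
  rw [Matrix.mul_apply, Fintype.sum_eq_single i]
  · simp [Pev, hj, hi, show r < (m + m) / 2 by omega]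
  · intro c hc
    have : c.val ≠ r := fun h => hc (Fin.ext (h.trans hi.symm))
    simp only [Matrix.transpose_apply, Pev, hj]
    split_ifs <;> first | omega | simp

lemma Pev_transpose_mul_apply_of_eq_two_mul_add_one (hn : Even n) (Y : Matrix (Fin n) α ℝ)
    {j i : Fin n} {r : ℕ} (hj : j.val = 2 * r + 1) (hi : i.val = n / 2 + r) (k : α) :
    ((Pev n)ᵀ * Y) j k = Y i k := by
  obtain ⟨m, rfl⟩ := hn
  rw [Matrix.mul_apply, Fintype.sum_eq_single i]
  · simp [Pev, hj, hi]
  · intro c hc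
    have : c.val ≠ (m + m) / 2 + r := fun h => hc (Fin.ext (h.trans hi.symm))
    simp only [Matrix.transpose_apply, Pev, hj]
    split_ifs <;> first | omega | simp

end Permutation

section Butterfly

variable {m : ℕ}

lemma Umat_left_factor_apply (i c : Fin (m + m)) :
    (blkdiag (n := m + m) (1 : Matrix (Fin 1) (Fin 1) ℝ)
      (blkdiag (n := m + m - 1)
        ((1 / √2) • blk4 (n := m + m - 2)
          (1 : Matrix (Fin ((m + m) / 2 - 1)) (Fin ((m + m) / 2 - 1)) ℝ) 1 1 (-1))
        (-1 : Matrix (Fin 1) (Fin 1) ℝ))) i c =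
    if i.val = 0 then (if c.val = 0 then 1 else 0)
    else if i.val < m then
      (if c.val = i.val then 1 / √2 else if c.val = i.val + m - 1 then 1 / √2 else 0)
    else if i.val = 2 * m - 1 then (if c.val = 2 * m - 1 then -1 else 0)
    else
      (if c.val = i.val - m + 1 then 1 / √2 else if c.val = i.val then -(1 / √2) else 0) := by
  have hi := i.isLt
  have hc := c.isLt
  rw [show (m + m) / 2 - 1 = m - 1 by omega]
  rcases (show i.val = 0 ∨ (1 ≤ i.val ∧ i.val < m) ∨ (m ≤ i.val ∧ i.val ≤ 2 * m - 2)
      ∨ i.val = 2 * m - 1 by omega) with hI | hI | hI | hI <;>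
  rcases (show c.val = 0 ∨ (1 ≤ c.val ∧ c.val < m) ∨ (m ≤ c.val ∧ c.val ≤ 2 * m - 2)
      ∨ c.val = 2 * m - 1 by omega) with hC | hC | hC | hC <;>
  simp (disch := first | omega | (simp only [Fin.val_mk]; omega)) only [blkdiag_apply₁₁,
    blkdiag_apply₁₂, blkdiag_apply₂₁, blkdiag_apply₂₂, blk4_apply₁₁, blk4_apply₁₂,
    blk4_apply₂₁, blk4_apply₂₂, Matrix.smul_apply, Matrix.neg_apply, Matrix.one_apply,
    smul_eq_mul, Fin.mk.injEq] <;>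
  split_ifs <;> first | rfl | omega | norm_num

lemma Umat_right_factor_apply (c a : Fin (m + m)) :
    (blkdiag (n := m + m) (1 : Matrix (Fin ((m + m) / 2)) (Fin ((m + m) / 2)) ℝ)
      (Dmat ((m + m) / 2) * flipMat ((m + m) / 2))) c a =
    if a.val < m then (if c.val = a.val then 1 else 0)
    else (if c.val = 3 * m - 1 - a.val then (-1) ^ (a.val + 1) else 0) := by
  have hc := c.isLt
  have ha := a.isLt
  rw [show (m + m) / 2 = m by omega]
  rcases (show c.val < m ∨ m ≤ c.val by omega) with hC | hC <;>
  rcases (show a.val < m ∨ m ≤ a.val by omega) with hA | hA <;>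
  simp (disch := first | omega | (simp only [Fin.val_mk]; omega)) only
    [blkdiag_apply₁₁, blkdiag_apply₁₂, blkdiag_apply₂₁, blkdiag_apply₂₂, Matrix.diagonal_mul,
      Dmat, flipMat, Matrix.one_apply, Fin.mk.injEq] <;>
  split_ifs <;> first
    | rfl
    | omega
    | rw [mul_one, neg_one_pow_eq_of_mod_two_eq (show (c.val - m) % 2 = (a.val + 1) % 2 by omega)]
    | simp

lemma Umat_apply (i a : Fin (m + m)) :
    Umat (m + m) i a =
    if i.val = 0 then (if a.val = 0 then 1 else 0)
    else if i.val < m then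
      (if a.val = i.val then 1 / √2
       else if a.val = 2 * m - i.val then (-1) ^ (a.val + 1) * (1 / √2) else 0)
    else if i.val = 2 * m - 1 then (if a.val = m then -(-1) ^ (a.val + 1) else 0)
    else
      (if a.val = i.val - m + 1 then 1 / √2
       else if a.val = 3 * m - 1 - i.val then -((-1) ^ (a.val + 1) * (1 / √2)) else 0) := by
  have hi := i.isLt
  have ha := a.isLt
  rw [Umat, Matrix.mul_apply]
  simp only [Umat_right_factor_apply _ a]
  by_cases hA : a.val < m
  · simp only [hA, if_true, mul_ite, mul_one, mul_zero]
    rw [sum_ite_val_eq (by omega), Fin.eta, Umat_left_factor_apply]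
    split_ifs <;> first | rfl | omega
  · simp only [hA, if_false, mul_ite, mul_zero]
    rw [sum_ite_val_eq (by omega), Umat_left_factor_apply]
    simp only
    split_ifs <;> first | rfl | omega | ring

variable {α : Type*} (X : Matrix (Fin (m + m)) α ℝ) (k : α)

lemma Umat_mul_apply_zero (hm : 0 < m) :
    (Umat (m + m) * X) ⟨0, by omega⟩ k = X ⟨0, by omega⟩ k := by
  simp only [Matrix.mul_apply, Umat_apply, ite_mul, one_mul, zero_mul, if_true]
  exact sum_ite_val_eq (by omega) _

lemma Umat_mul_apply_of_add_eq {r s : ℕ} (hr : 0 < r) (hs : 0 < s) (h : r + s = m) :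
    (Umat (m + m) * X) ⟨r, by omega⟩ k
      = (X ⟨r, by omega⟩ k + (-1) ^ (r + 1) * X ⟨m + s, by omega⟩ k) / √2 := by
  simp only [Matrix.mul_apply, Umat_apply, if_neg hr.ne', if_pos (show r < m by omega),
    ite_mul, zero_mul]
  rw [sum_ite_val_eq_add (by omega) (by omega) (by omega)]
  simp only [show 2 * m - r = m + s by omega,
    neg_one_pow_eq_of_mod_two_eq (show (m + s + 1) % 2 = (r + 1) % 2 by omega)]
  ring

lemma Umat_mul_apply_add_of_add_add_one_eq {r s : ℕ} (hs : 0 < s) (h : r + 1 + s = m) :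
    (Umat (m + m) * X) ⟨m + r, by omega⟩ k
      = (X ⟨r + 1, by omega⟩ k - (-1) ^ r * X ⟨m + s, by omega⟩ k) / √2 := by
  simp only [Matrix.mul_apply, Umat_apply, if_neg (show m + r ≠ 0 by omega),
    if_neg (show ¬ m + r < m by omega), if_neg (show m + r ≠ 2 * m - 1 by omega),
    ite_mul, zero_mul]
  rw [sum_ite_val_eq_add (by omega) (by omega) (by omega)]
  simp only [show m + r - m + 1 = r + 1 by omega, show 3 * m - 1 - (m + r) = m + s by omega,
    neg_one_pow_eq_of_mod_two_eq (show (m + s + 1) % 2 = r % 2 by omega)]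
  ring

lemma Umat_mul_apply_last {r : ℕ} (h : r + 1 = m) :
    (Umat (m + m) * X) ⟨m + r, by omega⟩ k = (-1) ^ m * X ⟨m, by omega⟩ k := by
  simp only [Matrix.mul_apply, Umat_apply, if_neg (show m + r ≠ 0 by omega),
    if_neg (show ¬ m + r < m by omega), if_pos (show m + r = 2 * m - 1 by omega),
    ite_mul, zero_mul]
  rw [sum_ite_val_eq (by omega), pow_succ]
  ring

end Butterfly

section Rotation

variable {m : ℕ}

lemma blkdiag_one_Dmat_mul_apply {α : Type*} (X : Matrix (Fin (m + m)) α ℝ)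
    (b : Fin (m + m)) (k : α) :
    (blkdiag (n := m + m) (1 : Matrix (Fin m) (Fin m) ℝ) (Dmat m) * X) b k
      = (if b.val < m then 1 else (-1) ^ (b.val - m)) * X b k := by
  have hb := b.isLt
  rw [Matrix.mul_apply, Fintype.sum_eq_single b]
  · by_cases hB : b.val < m
    · simp [blkdiag_apply₁₁ (q := m) _ _ _ _ hB hB, hB]
    · simp [blkdiag_apply₂₂ (q := m) _ _ _ _ hB hB (by omega) (by omega), hB, Dmat]
  · intro c hc
    have hc' : c.val ≠ b.val := fun h => hc (Fin.ext h)
    rcases (show b.val < m ∨ m ≤ b.val by omega) with hB | hB <;>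
    rcases (show c.val < m ∨ m ≤ c.val by omega) with hC | hC <;>
    simp (disch := omega) only [blkdiag_apply₁₁, blkdiag_apply₁₂, blkdiag_apply₂₁,
      blkdiag_apply₂₂, Matrix.one_apply, Dmat, Matrix.diagonal_apply, Fin.mk.injEq, zero_mul] <;>
    split_ifs <;> first | omega | simp

lemma Rmat_apply_of_lt (b k : Fin (m + m)) (hb : b.val < m) :
    Rmat (m + m) b k
      = if b.val = k.val ∨ b.val + k.val + 1 = m + m then cos (twiddle (m + m) k) else 0 := by
  have hk := k.isLt
  rw [Rmat, show (m + m) / 2 = m by omega, blkdiag_one_Dmat_mul_apply, if_pos hb, one_mul]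
  by_cases hK : k.val < m
  · rw [blk4_apply₁₁ _ _ _ _ _ _ hb hK, Matrix.diagonal_apply]
    simp only [Fin.mk.injEq, show b.val + k.val + 1 ≠ m + m by omega, or_false]
    split_ifs with h
    · rw [h]; rfl
    · rfl
  · rw [blk4_apply₁₂ _ _ _ _ _ _ hb hK (by omega), Matrix.diagonal_mul]
    simp only [flipMat, mul_ite, mul_one, mul_zero, show b.val ≠ k.val by omega, false_or]
    split_ifs
    · exact sin_twiddle_of_add_eq (by omega)
    all_goals first | rfl | omega

lemma Rmat_apply_of_eq_add (b k : Fin (m + m)) {b' : ℕ} (hb : b.val = m + b') :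
    Rmat (m + m) b k = (-1) ^ b' *
      if b.val = k.val then sin (twiddle (m + m) k)
      else if b.val + k.val + 1 = m + m then -sin (twiddle (m + m) k) else 0 := by
  have hk := k.isLt
  have hb' := b.isLt
  rw [Rmat, show (m + m) / 2 = m by omega, blkdiag_one_Dmat_mul_apply,
    if_neg (show ¬ b.val < m by omega), show b.val - m = b' by omega]
  congr 1
  by_cases hK : k.val < m
  · rw [blk4_apply₂₁ _ _ _ _ _ _ (by omega) (by omega) hK, Matrix.neg_apply, Matrix.mul_diagonal]
    simp only [flipMat, ite_mul, one_mul, zero_mul, show b.val ≠ k.val by omega, if_false]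
    split_ifs <;> first | rfl | omega | simp
  · rw [blk4_apply₂₂ _ _ _ _ _ _ (by omega) (by omega) hK (by omega), Matrix.diagonal_apply]
    simp only [Fin.mk.injEq]
    split_ifs
    · exact cos_twiddle_of_add_eq (by omega)
    all_goals first | omega | rfl

end Rotation

local notation "BR" m => blkdiag (n := m + m) (C2 ((m + m) / 2)) (C2 ((m + m) / 2)) * Rmat (m + m)

section Product

variable {m : ℕ}

lemma blkdiag_C2_apply_of_lt {a b : Fin (m + m)} (ha : a.val < m) (hb : b.val < m) :
    blkdiag (n := m + m) (C2 ((m + m) / 2)) (C2 ((m + m) / 2)) a b = dct2 m a b := by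
  rw [blkdiag_apply₁₁ _ _ _ _ (by omega) (by omega), C2_apply]
  congr 1
  omega

lemma blkdiag_C2_apply_of_eq_add {a b : Fin (m + m)} {a' b' : ℕ} (ha : a.val = m + a')
    (hb : b.val = m + b') :
    blkdiag (n := m + m) (C2 ((m + m) / 2)) (C2 ((m + m) / 2)) a b = dct2 m a' b' := by
  have := a.isLt
  have := b.isLt
  rw [blkdiag_apply₂₂ _ _ _ _ (by omega) (by omega) (by omega) (by omega), C2_apply]
  simp only [show (m + m) / 2 = m by omega, ha, hb, Nat.add_sub_cancel_left]

lemma blkdiag_C2_apply_of_lt_of_le {a b : Fin (m + m)} (ha : a.val < m) (hb : m ≤ b.val) :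
    blkdiag (n := m + m) (C2 ((m + m) / 2)) (C2 ((m + m) / 2)) a b = 0 :=
  blkdiag_apply₁₂ _ _ _ _ (by omega) (by omega)

lemma blkdiag_C2_apply_of_le_of_lt {a b : Fin (m + m)} (ha : m ≤ a.val) (hb : b.val < m) :
    blkdiag (n := m + m) (C2 ((m + m) / 2)) (C2 ((m + m) / 2)) a b = 0 :=
  blkdiag_apply₂₁ _ _ _ _ (by omega) (by omega)

lemma blkdiag_C2_mul_Rmat_apply_of_lt (a k : Fin (m + m)) (ha : a.val < m) :
    (BR m) a k = dct2 m a k * cos (twiddle (m + m) k) := by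
  have hk := k.isLt
  obtain ⟨l, hl, hkl⟩ : ∃ l, l < m ∧ (l = k.val ∨ l + k.val + 1 = m + m) :=
    if hK : k.val < m then ⟨k, hK, Or.inl rfl⟩ else ⟨m + m - 1 - k, by omega, Or.inr (by omega)⟩
  rw [Matrix.mul_apply, Fintype.sum_eq_single ⟨l, by omega⟩]
  · rw [blkdiag_C2_apply_of_lt ha hl, Rmat_apply_of_lt _ _ hl, if_pos hkl]
    rcases hkl with rfl | hkl
    · rfl
    · rw [dct2_reflect _ (by omega : k.val + l + 1 = m + m)]
  · intro b hb
    have hb' : b.val ≠ l := fun h => hb (Fin.ext h)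
    by_cases hB : b.val < m
    · rw [Rmat_apply_of_lt _ _ hB, if_neg (by omega), mul_zero]
    · rw [blkdiag_C2_apply_of_lt_of_le ha (by omega), zero_mul]

lemma blkdiag_C2_mul_Rmat_apply_of_eq_add (a k : Fin (m + m)) {a' : ℕ} (ha : a.val = m + a') :
    (BR m) a k = (-1) ^ (a' + m + k) * dct2 m a' k * sin (twiddle (m + m) k) := by
  have hk := k.isLt
  have hm : 0 < m := by omega
  obtain ⟨l, hl, hkl⟩ : ∃ l, m ≤ l ∧ l < m + m ∧ (l = k.val ∨ l + k.val + 1 = m + m) :=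
    if hK : k.val < m then ⟨m + m - 1 - k, by omega, by omega, Or.inr (by omega)⟩
    else ⟨k, by omega, by omega, Or.inl rfl⟩
  rw [Matrix.mul_apply, Fintype.sum_eq_single ⟨l, hkl.1⟩]
  · rw [blkdiag_C2_apply_of_eq_add ha (show l = m + (l - m) by omega),
      Rmat_apply_of_eq_add _ _ (show l = m + (l - m) by omega)]
    rcases hkl.2 with hlk | hlk
    · rw [if_pos hlk, hlk, dct2_shift _ hm (show m + (k.val - m) = k.val by omega),
        ← neg_one_pow_eq_of_mod_two_eq (show (a' + (k.val - m)) % 2 = (a' + m + k) % 2 by omega),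
        pow_add]
      ring
    · rw [if_neg (show l ≠ k.val by omega), if_pos hlk,
        dct2_reflect_half _ (show k.val + (l - m) + 1 = m by omega),
        ← neg_one_pow_eq_of_mod_two_eq (show (a' + (l - m) + 1) % 2 = (a' + m + k) % 2 by omega),
        pow_succ, pow_add]
      ring
  · intro b hb
    have hb' : b.val ≠ l := fun h => hb (Fin.ext h)
    by_cases hB : b.val < m
    · rw [blkdiag_C2_apply_of_le_of_lt (by omega) hB, zero_mul]
    · rw [Rmat_apply_of_eq_add _ _ (show b.val = m + (b.val - m) by omega), if_neg (by omega),
        if_neg (by omega), mul_zero, mul_zero]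

end Product

section Rows

variable {m : ℕ}

lemma C4_apply_eq_Umat_mul_of_eq_two_mul {r : ℕ} (hr : r < m) {j : Fin (m + m)}
    (hj : j.val = 2 * r) (k : Fin (m + m)) :
    C4 (m + m) j k = (Umat (m + m) * BR m) ⟨r, by omega⟩ k := by
  rw [C4_apply_of_eq_two_mul hj]
  rcases Nat.eq_zero_or_pos r with rfl | hr0
  · rw [Umat_mul_apply_zero _ _ hr, blkdiag_C2_mul_Rmat_apply_of_lt _ _ hr, dct2_zero,
      dctAngle_zero, zero_add]
  obtain ⟨s, hs⟩ : ∃ s, r + s = m := ⟨m - r, by omega⟩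
  rw [Umat_mul_apply_of_add_eq _ _ hr0 (by omega) hs, blkdiag_C2_mul_Rmat_apply_of_lt _ _ hr,
    blkdiag_C2_mul_Rmat_apply_of_eq_add _ _ rfl, dct2_of_pos_of_lt hr0 hr,
    dct2_of_add_eq hr0 (by omega) hs, cos_add]
  have hsign : (-1 : ℝ) ^ (r + 1) * (-1) ^ (s + m + k) * (-1) ^ k.val = -1 := by
    rw [← pow_add, ← pow_add]
    exact Odd.neg_one_pow ⟨m + k, by omega⟩
  linear_combination (-(√(2 / m) * sin (dctAngle m r k) * sin (twiddle (m + m) k) / √2)) * hsign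

lemma C4_apply_eq_Umat_mul_of_eq_two_mul_add_one {r : ℕ} (hr : r < m) {j : Fin (m + m)}
    (hj : j.val = 2 * r + 1) (k : Fin (m + m)) :
    C4 (m + m) j k = (Umat (m + m) * BR m) ⟨m + r, by omega⟩ k := by
  rw [C4_apply_of_eq_two_mul_add_one hj]
  by_cases hlast : r + 1 = m
  · rw [Umat_mul_apply_last _ _ hlast,
      blkdiag_C2_mul_Rmat_apply_of_eq_add _ _ (Nat.add_zero m).symm, dct2_zero,
      hlast, dctAngle_of_add_eq (by omega) (zero_add m), dctAngle_zero, sub_zero,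
      cos_odd_mul_pi_div_two_sub]
    have hsign : (-1 : ℝ) ^ m * (-1) ^ (0 + m + k) = (-1) ^ k.val := by
      rw [← pow_add]
      exact neg_one_pow_eq_of_mod_two_eq (by omega)
    linear_combination (-(√(2 / m) / √2 * sin (twiddle (m + m) k))) * hsign
  obtain ⟨s, hs⟩ : ∃ s, r + 1 + s = m := ⟨m - r - 1, by omega⟩
  have hs0 : 0 < s := by omega
  rw [Umat_mul_apply_add_of_add_add_one_eq _ _ hs0 hs,
    blkdiag_C2_mul_Rmat_apply_of_lt _ _ (show r + 1 < m by omega),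
    blkdiag_C2_mul_Rmat_apply_of_eq_add _ _ rfl, dct2_of_pos_of_lt r.succ_pos (by omega),
    dct2_of_add_eq r.succ_pos hs0 (by omega), cos_sub]
  have hsign : (-1 : ℝ) ^ r * (-1) ^ (s + m + k) * (-1) ^ k.val = -1 := by
    rw [← pow_add, ← pow_add]
    exact Odd.neg_one_pow ⟨m + k - 1, by omega⟩
  linear_combination (√(2 / m) * sin (dctAngle m (r + 1) k) * sin (twiddle (m + m) k) / √2) * hsign

end Rows

theorem dct4_factorization_general (n : ℕ) (hev : Even n) :
    C4 n = (Pev n)ᵀ * Umat n * blkdiag (C2 (n / 2)) (C2 (n / 2)) * Rmat n := by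
  ext j k
  obtain ⟨m, rfl⟩ := hev
  have hj := j.isLt
  rw [Matrix.mul_assoc, Matrix.mul_assoc]
  obtain ⟨r, hr | hr⟩ := Nat.even_or_odd' j.val
  · rw [Pev_transpose_mul_apply_of_eq_two_mul ⟨m, rfl⟩ _ hr (i := ⟨r, by omega⟩) rfl]
    exact C4_apply_eq_Umat_mul_of_eq_two_mul (by omega) hr k
  · rw [Pev_transpose_mul_apply_of_eq_two_mul_add_one ⟨m, rfl⟩ _ hr (i := ⟨m + r, by omega⟩)
      (by simp only; omega)]
    exact C4_apply_eq_Umat_mul_of_eq_two_mul_add_one (by omega) hr k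

theorem dct4_factorization (n : ℕ) (hn : 4 ≤ n) (hev : Even n) :
    C4 n = (Pev n)ᵀ * Umat n * blkdiag (C2 (n / 2)) (C2 (n / 2)) * Rmat n :=
  dct4_factorization_general n hev
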